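/- arXiv:2010.07890 — 3 statements merged into one kernel-verified Lean document; each statement's English description precedes it below -/
import Mathlib

section
/- Let h be the constant arithmetic function h(n) = 1 for n ≥ 1 (with h(0) := 0). Let n, m ≥ 1 be integers and let μ be a partition of m. Then 𝓗(μ, n) = multinomial(ℓ(μ); 𝔪_1, …, 𝔪_m) · C(n − |μ|, ℓ(μ)), where 𝔪_j is the multiplicity of j as a part of μ, multinomial(ℓ(μ); 𝔪_1, …, 𝔪_m) = ℓ(μ)!/(𝔪_1! ⋯ 𝔪_m!), and C(a,b) is the binomial coefficient. -/
/-
For `h = 1` every factor `h_{μ_{r+1}}(k)` in the recursion for `H` equals `1`, and the recursion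
collapses to the hockey-stick identity `Σ_{k} C(k - b, t) = C(n - b, t + 1)`; by induction on the
length, `H(λ, n) = C(n - |λ|, ℓ(λ))` for every composition `λ`. This depends only on the size and
length of `λ`, so `𝓗(μ, n)` is the number of distinct rearrangements of `μ` times that binomial
coefficient, and the rearrangements are counted by the multinomial coefficient of the
multiplicities (choose the first part, then recurse on the rest).
-/

open Finset Polynomial

/-- The recursively defined polynomials `P_n^{g,h}` attached to arithmetic functions
`g, h : ℕ → ℝ` (values at `0` are irrelevant): `P_0 = 1` and
`P_n(x) = (x / h(n)) · Σ_{k=1}^n g(k) · P_{n-k}(x)`. -/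
noncomputable def Ppoly (g h : ℕ → ℝ) : ℕ → Polynomial ℝ
  | 0 => 1
  | (n+1) => Polynomial.C (h (n+1))⁻¹ * Polynomial.X *
      ∑ k ∈ Finset.range (n+1), Polynomial.C (g (k+1)) * Ppoly g h (n - k)
  termination_by n => n
  decreasing_by simp_wf <;> omega

/-- `A_{n,m}^{g,h}`: the coefficient of `x^m` in `(∏_{k=1}^n h(k)) · P_n^{g,h}(x)`. -/
noncomputable def Acoeff (g h : ℕ → ℝ) (n m : ℕ) : ℝ :=
  (∏ k ∈ Finset.Icc 1 n, h k) * (Ppoly g h n).coeff m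

/-- `h` extended by the convention `h(0) := 0`. -/
noncomputable def hExt (h : ℕ → ℝ) (n : ℕ) : ℝ := if n = 0 then 0 else h n

/-- `h_m(n) = ∏_{k=0}^{m-1} h(n-k)` (with the convention `h(0) := 0`). -/
noncomputable def hIter (h : ℕ → ℝ) (m n : ℕ) : ℝ :=
  ∏ k ∈ Finset.range m, hExt h (n - k)

/-- Helper for `H(μ,n)`: defined on reversed compositions, peeling off the head
(which is the last part `μ_{r+1}` of the original composition). -/
noncomputable def Hrev (h : ℕ → ℝ) : List ℕ → ℕ → ℝ
  | [], _ => 1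
  | (a :: t), n =>
      if n < (a :: t).sum + (a :: t).length then 0
      else ∑ k ∈ Finset.Ico ((a :: t).sum + (a :: t).length - 1) n,
        hIter h a k * Hrev h t (k - a)

/-- `H(μ, n)` for a composition `μ` (a list of positive integers): `H(ε,n) = 1`,
`H(μ,n) = Σ_{k=|μ|+ℓ(μ)-1}^{n-1} h_{μ_{r+1}}(k) · H((μ_1,…,μ_r), k - μ_{r+1})`
if `n ≥ |μ| + ℓ(μ)`, and `0` otherwise. -/
noncomputable def HFun (h : ℕ → ℝ) (μ : List ℕ) (n : ℕ) : ℝ := Hrev h μ.reverse n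

/-- `𝓗(μ, n) = Σ_{λ ∈ Orb(μ)} H(λ, n)`: sum over all distinct rearrangements of `μ`. -/
noncomputable def HCal (h : ℕ → ℝ) (μ : List ℕ) (n : ℕ) : ℝ :=
  ∑ lam ∈ μ.permutations.toFinset, HFun h lam n

/-- `𝓖(μ) = ∏_{k=1}^{ℓ(μ)} g(μ_k + 1)`. -/
noncomputable def GCal (g : ℕ → ℝ) (μ : List ℕ) : ℝ := (μ.map (fun p => g (p + 1))).prod

theorem Nat.sum_Ico_choose_sub (b t n : ℕ) :
    ∑ k ∈ Ico (b + t) n, (k - b).choose t = (n - b).choose (t + 1) := by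
  rw [sum_Ico_eq_sum_range]
  cases hN : n - (b + t) with
  | zero => rw [sum_range_zero, Nat.choose_eq_zero_of_lt (by omega)]
  | succ M =>
    rw [show n - b = M + t + 1 by omega, ← sum_range_add_choose]
    exact sum_congr rfl fun i _ => by congr 1; omega

open scoped Nat

namespace List

variable {α : Type*} [DecidableEq α]

theorem permutations_toFinset_eq_biUnion {l : List α} (hl : l ≠ []) :
    l.permutations.toFinset =
      l.toFinset.biUnion fun a => (l.erase a).permutations.toFinset.image (a :: ·) := by
  ext x
  simp only [mem_toFinset, mem_permutations, mem_biUnion, mem_image]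
  constructor
  · intro hx
    have hx0 : x ≠ [] := by rintro rfl; exact hl hx.symm.eq_nil
    obtain ⟨a, t, rfl⟩ := exists_cons_of_ne_nil hx0
    exact ⟨a, (cons_perm_iff_perm_erase.1 hx).1, t, (cons_perm_iff_perm_erase.1 hx).2, rfl⟩
  · rintro ⟨a, ha, t, ht, rfl⟩
    exact cons_perm_iff_perm_erase.2 ⟨ha, ht⟩

theorem card_permutations_toFinset_eq_sum_erase {l : List α} (hl : l ≠ []) :
    #l.permutations.toFinset = ∑ a ∈ l.toFinset, #(l.erase a).permutations.toFinset := by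
  rw [permutations_toFinset_eq_biUnion hl, card_biUnion]
  · exact sum_congr rfl fun a _ => card_image_of_injective _ cons_injective
  · intro a _ b _ hab
    rw [Function.onFun, Finset.disjoint_left]
    simp only [mem_image]
    rintro _ ⟨t, _, rfl⟩ ⟨t', _, h⟩
    exact hab (cons.inj h).1.symm

theorem prod_factorial_count_eq_count_mul_erase {T : Finset α} {l : List α} {a : α}
    (ha : a ∈ l) (haT : a ∈ T) :
    ∏ b ∈ T, (l.count b)! = l.count a * ∏ b ∈ T, ((l.erase a).count b)! := by
  obtain ⟨c, hc⟩ := Nat.exists_eq_add_one_of_ne_zero (count_pos_iff.2 ha).ne'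
  rw [← mul_prod_erase T _ haT, ← mul_prod_erase T (fun b => ((l.erase a).count b)!) haT,
    count_erase_self, hc, ← mul_assoc, Nat.add_sub_cancel, ← Nat.factorial_succ]
  congr 1
  exact prod_congr rfl fun b hb => by rw [count_erase_of_ne (ne_of_mem_erase hb)]

theorem prod_factorial_count_mul_card_permutations_toFinset {T : Finset α} {l : List α}
    (hT : l.toFinset ⊆ T) : (∏ a ∈ T, (l.count a)!) * #l.permutations.toFinset = l.length ! := by
  induction hlen : l.length generalizing l with
  | zero => simp [eq_nil_of_length_eq_zero hlen]
  | succ N ih =>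
    have hl : l ≠ [] := ne_nil_of_length_eq_add_one hlen
    have hterm : ∀ a ∈ l.toFinset,
        (∏ b ∈ T, (l.count b)!) * #(l.erase a).permutations.toFinset = l.count a * N ! := by
      intro a ha
      rw [mem_toFinset] at ha
      rw [prod_factorial_count_eq_count_mul_erase ha (hT (mem_toFinset.2 ha)), mul_assoc,
        ih (fun b hb => hT (mem_toFinset.2 (mem_of_mem_erase (mem_toFinset.1 hb))))
          (by rw [length_erase_of_mem ha, hlen]; rfl)]
    rw [card_permutations_toFinset_eq_sum_erase hl, mul_sum, sum_congr rfl hterm, ← sum_mul,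
      sum_toFinset_count_eq_length, hlen, Nat.factorial_succ]

end List

theorem hIter_const_one {a k : ℕ} (h : a ≤ k) : hIter (fun _ => 1) a k = 1 :=
  prod_eq_one fun i hi => by simp [hExt, show k - i ≠ 0 by simp at hi; omega]

theorem Hrev_const_one (l : List ℕ) (n : ℕ) :
    Hrev (fun _ => 1) l n = ((n - l.sum).choose l.length : ℝ) := by
  induction l generalizing n with
  | nil => simp [Hrev]
  | cons a t ih =>
    rw [Hrev, List.sum_cons, List.length_cons]
    split_ifs with hlt
    · rw [Nat.choose_eq_zero_of_lt (by omega), Nat.cast_zero]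
    · have hterm : ∀ k ∈ Ico (a + t.sum + t.length) n,
          hIter (fun _ => 1) a k * Hrev (fun _ => 1) t (k - a) =
            ((k - (a + t.sum)).choose t.length : ℝ) := by
        intro k hk
        rw [mem_Ico] at hk
        rw [hIter_const_one (by omega), one_mul, ih, Nat.sub_sub]
      rw [show a + t.sum + (t.length + 1) - 1 = a + t.sum + t.length by omega,
        sum_congr rfl hterm, ← Nat.cast_sum, Nat.sum_Ico_choose_sub]

theorem HFun_const_one (μ : List ℕ) (n : ℕ) :
    HFun (fun _ => 1) μ n = ((n - μ.sum).choose μ.length : ℝ) := by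
  rw [HFun, Hrev_const_one, List.sum_reverse, List.length_reverse]

theorem HCal_const_one (μ : List ℕ) (n : ℕ) :
    HCal (fun _ => 1) μ n = #μ.permutations.toFinset * ((n - μ.sum).choose μ.length : ℝ) := by
  rw [HCal, ← nsmul_eq_mul, ← sum_const]
  refine sum_congr rfl fun lam hlam => ?_
  have hperm := List.mem_permutations.1 (List.mem_toFinset.1 hlam)
  rw [HFun_const_one, hperm.sum_eq, hperm.length_eq]

theorem HCal_h_one_general (n m : ℕ) (μ : Nat.Partition m) :
    HCal (fun _ => 1) μ.parts.toList n =
      ((Nat.factorial (Multiset.card μ.parts) : ℝ) /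
          ∏ j ∈ Finset.Icc 1 m, (Nat.factorial (μ.parts.count j) : ℝ)) *
        (Nat.choose (n - μ.parts.sum) (Multiset.card μ.parts) : ℝ) := by
  have hT : μ.parts.toList.toFinset ⊆ Icc 1 m := fun a ha => by
    have ha : a ∈ μ.parts := by simpa using ha
    exact mem_Icc.2 ⟨μ.parts_pos ha, (Multiset.le_sum_of_mem ha).trans_eq μ.parts_sum⟩
  have hcard := List.prod_factorial_count_mul_card_permutations_toFinset hT
  simp only [← Multiset.coe_count, Multiset.coe_toList, Multiset.length_toList] at hcard
  rw [HCal_const_one, Multiset.sum_toList, Multiset.length_toList, ← hcard]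
  push_cast
  field_simp

/-- For `h = 1` and a partition `μ` of `m`:
`𝓗(μ, n) = (ℓ(μ)! / (𝔪_1! ⋯ 𝔪_m!)) · C(n - |μ|, ℓ(μ))`. -/
theorem HCal_h_one (n m : ℕ) (hn : 1 ≤ n) (hm : 1 ≤ m) (μ : Nat.Partition m) :
    HCal (fun _ => 1) μ.parts.toList n =
      ((Nat.factorial (Multiset.card μ.parts) : ℝ) /
          ∏ j ∈ Finset.Icc 1 m, (Nat.factorial (μ.parts.count j) : ℝ)) *
        (Nat.choose (n - μ.parts.sum) (Multiset.card μ.parts) : ℝ) :=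
  HCal_h_one_general n m μ
end

section
/- Let id denote the arithmetic function id(n) = n. Then for all integers 1 ≤ m ≤ n, A_{n,m}^{id,id}/n! = C(n−1, m−1)/m! (the Lah numbers), where C(a,b) is the binomial coefficient. -/
open Finset Polynomial

/-!
Write `c(n, m)` for the coefficient of `x^m` in `P_n^{id,id}`. The defining recurrence gives
`(n + 1) c(n + 1, m + 1) = ∑_{j ≤ n} (n - j + 1) c(j, m)`, and `c(j, 0) = [j = 0]`. The closed form
`c(n + 1, m + 1) = C(n, m) / (m + 1)!` follows by strong induction on `n`: after inserting it, the
sum becomes `∑_{j < n} (n - j) C(j, l) = C(n + 1, l + 2)` (the hockey-stick identity applied twice),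
and `(n + 1) C(n, l + 1) = (l + 2) C(n + 1, l + 2)` finishes the step.
-/

open scoped Nat

lemma sum_range_choose_left (n l : ℕ) : ∑ j ∈ range n, j.choose l = n.choose (l + 1) := by
  induction n with
  | zero => simp
  | succ n ih => rw [sum_range_succ, ih, Nat.choose_succ_succ', add_comm]

lemma sum_range_tsub_mul_choose (n l : ℕ) :
    ∑ j ∈ range n, (n - j) * j.choose l = (n + 1).choose (l + 2) := by
  induction n with
  | zero => simp [Nat.choose_eq_zero_of_lt]
  | succ n ih =>
    calc ∑ j ∈ range (n + 1), (n + 1 - j) * j.choose l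
        = ∑ j ∈ range (n + 1), ((n - j) * j.choose l + j.choose l) := by
          refine sum_congr rfl fun j hj => ?_
          rw [show n + 1 - j = n - j + 1 by grind, add_one_mul]
      _ = (n + 1).choose (l + 2) + (n + 1).choose (l + 1) := by
          rw [sum_add_distrib, sum_range_succ, Nat.sub_self, zero_mul, add_zero, ih,
            sum_range_choose_left]
      _ = (n + 2).choose (l + 2) := by rw [Nat.choose_succ_succ' (n + 1) (l + 1), add_comm]

section Recurrence

variable (g h : ℕ → ℝ)

lemma coeff_Ppoly_zero (m : ℕ) : (Ppoly g h 0).coeff m = if m = 0 then 1 else 0 := by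
  rw [Ppoly.eq_1, coeff_one]

lemma coeff_Ppoly_succ_zero (n : ℕ) : (Ppoly g h (n + 1)).coeff 0 = 0 := by
  rw [Ppoly.eq_2, mul_assoc, coeff_C_mul, mul_coeff_zero, coeff_X_zero, zero_mul, mul_zero]

lemma coeff_Ppoly_succ_succ (n m : ℕ) :
    (Ppoly g h (n + 1)).coeff (m + 1) =
      (h (n + 1))⁻¹ * ∑ j ∈ range (n + 1), g (n - j + 1) * (Ppoly g h j).coeff m := by
  rw [Ppoly.eq_2, mul_assoc, coeff_C_mul, coeff_X_mul, finsetSum_coeff, ← sum_range_reflect]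
  refine congrArg _ (sum_congr rfl fun j hj => ?_)
  rw [coeff_C_mul, show n + 1 - 1 - j = n - j by omega, show n - (n - j) = j by grind]

end Recurrence

lemma coeff_Ppoly_id_succ_succ (n m : ℕ) :
    (Ppoly (fun k => (k : ℝ)) (fun k => (k : ℝ)) (n + 1)).coeff (m + 1) =
      n.choose m / (m + 1)! := by
  induction n using Nat.strong_induction_on generalizing m with
  | _ n ih =>
  rw [coeff_Ppoly_succ_succ, sum_range_succ', coeff_Ppoly_zero]
  cases m with
  | zero =>
    simp [coeff_Ppoly_succ_zero]
    field_simp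
  | succ l =>
    have hsum : ∑ j ∈ range n, ((n - (j + 1) + 1 : ℕ) : ℝ) *
        (Ppoly (fun k => (k : ℝ)) (fun k => (k : ℝ)) (j + 1)).coeff (l + 1) =
          ((n + 1).choose (l + 2) : ℝ) / (l + 1)! := by
      rw [← sum_range_tsub_mul_choose, Nat.cast_sum, sum_div]
      refine sum_congr rfl fun j hj => ?_
      rw [ih j (mem_range.1 hj), show n - (j + 1) + 1 = n - j by grind]
      push_cast
      ring
    have hchoose : ((n + 1 : ℕ) : ℝ) * n.choose (l + 1) = (n + 1).choose (l + 2) * (l + 2 : ℕ) :=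
      mod_cast Nat.add_one_mul_choose_eq n (l + 1)
    rw [hsum, Nat.factorial_succ (l + 1)]
    push_cast at hchoose ⊢
    field_simp
    linear_combination -hchoose

/-- Lah numbers: `A_{n,m}^{id,id}/n! = C(n-1,m-1)/m!`. -/
theorem lah_numbers (n m : ℕ) (hm1 : 1 ≤ m) (hmn : m ≤ n) :
    Acoeff (fun k => (k : ℝ)) (fun k => (k : ℝ)) n m / (Nat.factorial n : ℝ) =
      (Nat.choose (n - 1) (m - 1) : ℝ) / (Nat.factorial m : ℝ) := by
  obtain ⟨m, rfl⟩ : ∃ m', m = m' + 1 := ⟨m - 1, by omega⟩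
  obtain ⟨n, rfl⟩ : ∃ n', n = n' + 1 := ⟨n - 1, by omega⟩
  have hprod : ∏ k ∈ Icc 1 (n + 1), (k : ℝ) = (n + 1)! := by
    rw [← Nat.cast_prod, ← Ico_add_one_right_eq_Icc, prod_Ico_id_eq_factorial]
  rw [Acoeff, hprod, coeff_Ppoly_id_succ_succ, Nat.add_sub_cancel, Nat.add_sub_cancel]
  field_simp
end

section
/- Let g be a normalized arithmetic function of moderate growth (i.e., |g(n)| ≤ C^n for some constant C > 0). Then for all integers 1 ≤ m ≤ n, A_{n,m}^{g,id}/n! = (1/m!) · Σ_{(k_1, …, k_m)} ∏_{i=1}^{m} g(k_i)/k_i, where the sum runs over all m-tuples of positive integers (k_1, …, k_m) with k_1 + … + k_m = n. -/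
open Finset Polynomial

/-!
For `h = id` the recursion reads `n P_n = x ∑_k g(k) P_{n-k}`, so `m! [x^m] P_n` satisfies
`n c_{m,n} = m ∑_k g(k) c_{m-1,n-k}`. The composition sums `S_{m,n} = ∑ ∏ g(k_i)/k_i` satisfy the
same recursion: weighting each composition by `n = ∑ k_j` is, by symmetry of the coordinates,
weighting it `m` times by `k_1`, which cancels the denominator `k_1` of the first factor.
-/

namespace ArithPoly

open Nat

theorem prod_Icc_natCast (n : ℕ) : ∏ k ∈ Icc 1 n, (k : ℝ) = n ! := by
  induction n with
  | zero => simp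
  | succ n ih =>
    rw [prod_Icc_succ_top (by omega), ih, factorial_succ]
    push_cast; ring

def posTuples (m n : ℕ) : Finset (Fin m → ℕ) :=
  (Finset.Nat.antidiagonalTuple m n).filter fun t => ∀ i, 0 < t i

theorem mem_posTuples {m n : ℕ} {t : Fin m → ℕ} :
    t ∈ posTuples m n ↔ ∑ i, t i = n ∧ ∀ i, 0 < t i := by
  rw [posTuples, mem_filter, Finset.Nat.mem_antidiagonalTuple]

theorem sum_posTuples_comp_perm {β : Type*} [AddCommMonoid β] {m n : ℕ}
    (f : (Fin m → ℕ) → β) (σ : Equiv.Perm (Fin m)) :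
    ∑ t ∈ posTuples m n, f (t ∘ σ) = ∑ t ∈ posTuples m n, f t := by
  have mem_comp : ∀ (τ : Equiv.Perm (Fin m)) t, t ∈ posTuples m n → t ∘ τ ∈ posTuples m n := by
    intro τ t ht
    rw [mem_posTuples] at ht ⊢
    exact ⟨(Equiv.sum_comp τ t).trans ht.1, fun i => ht.2 (τ i)⟩
  refine sum_nbij' (· ∘ σ) (· ∘ σ.symm) (mem_comp σ) (mem_comp σ.symm) ?_ ?_ fun _ _ => rfl
  all_goals intro t _; ext i; simp

theorem sum_posTuples_succ {β : Type*} [AddCommMonoid β] (M N : ℕ)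
    (F : (Fin (M + 1) → ℕ) → β) :
    ∑ t ∈ posTuples (M + 1) (N + 1), F t =
      ∑ k ∈ range (N + 1), ∑ s ∈ posTuples M (N - k), F (Fin.cons (k + 1) s) := by
  have cons_pred_tail :
      ∀ t ∈ posTuples (M + 1) (N + 1), Fin.cons (t 0 - 1 + 1) (Fin.tail t) = t :=
    fun t ht => by rw [Nat.sub_add_cancel ((mem_posTuples.1 ht).2 0), Fin.cons_self_tail]
  rw [sum_sigma']
  refine sum_bij' (fun t _ => ⟨t 0 - 1, Fin.tail t⟩) (fun p _ => Fin.cons (p.1 + 1) p.2)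
    ?_ ?_ cons_pred_tail (fun _ _ => by simp) fun t ht => by rw [cons_pred_tail t ht]
  · intro t ht
    rw [mem_posTuples, Fin.sum_univ_succ] at ht
    have := ht.2 0
    simp only [mem_sigma, mem_range, mem_posTuples, Fin.tail]
    exact ⟨by omega, by omega, fun i => ht.2 i.succ⟩
  · rintro ⟨k, s⟩ hks
    simp only [mem_sigma, mem_range, mem_posTuples] at hks
    rw [mem_posTuples, Fin.sum_univ_succ]
    refine ⟨by simp only [Fin.cons_zero, Fin.cons_succ]; omega, Fin.cases ?_ ?_⟩
    · simp
    · simpa using hks.2.2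

noncomputable def tupleWeight (g : ℕ → ℝ) {m : ℕ} (t : Fin m → ℕ) : ℝ :=
  ∏ i, g (t i) / t i

theorem tupleWeight_comp_perm (g : ℕ → ℝ) {m : ℕ} (t : Fin m → ℕ) (σ : Equiv.Perm (Fin m)) :
    tupleWeight g (t ∘ σ) = tupleWeight g t :=
  Equiv.prod_comp σ fun i => g (t i) / t i

theorem tupleWeight_cons (g : ℕ → ℝ) {m : ℕ} (a : ℕ) (s : Fin m → ℕ) :
    tupleWeight g (Fin.cons a s : Fin (m + 1) → ℕ) = g a / a * tupleWeight g s := by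
  simp only [tupleWeight, Fin.prod_univ_succ, Fin.cons_zero, Fin.cons_succ]

noncomputable def compositionSum (g : ℕ → ℝ) (m n : ℕ) : ℝ :=
  ∑ t ∈ posTuples m n, tupleWeight g t

theorem succ_mul_compositionSum_succ (g : ℕ → ℝ) (M N : ℕ) :
    ((N : ℝ) + 1) * compositionSum g (M + 1) (N + 1) =
      ((M : ℝ) + 1) * ∑ k ∈ range (N + 1), g (k + 1) * compositionSum g M (N - k) := by
  have coord_sum : ∀ t ∈ posTuples (M + 1) (N + 1), ((N : ℝ) + 1) = ∑ j, (t j : ℝ) := by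
    intro t ht
    rw [← Nat.cast_sum, (mem_posTuples.1 ht).1]
    push_cast; ring
  have each_coord : ∀ j : Fin (M + 1),
      ∑ t ∈ posTuples (M + 1) (N + 1), (t j : ℝ) * tupleWeight g t =
        ∑ t ∈ posTuples (M + 1) (N + 1), (t 0 : ℝ) * tupleWeight g t := by
    intro j
    rw [← sum_posTuples_comp_perm _ (Equiv.swap 0 j)]
    simp [tupleWeight_comp_perm]
  calc ((N : ℝ) + 1) * compositionSum g (M + 1) (N + 1)
      = ∑ j : Fin (M + 1), ∑ t ∈ posTuples (M + 1) (N + 1), (t j : ℝ) * tupleWeight g t := by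
        rw [compositionSum, Finset.mul_sum, sum_comm]
        exact sum_congr rfl fun t ht => by rw [coord_sum t ht, Finset.sum_mul]
    _ = ((M : ℝ) + 1) * ∑ t ∈ posTuples (M + 1) (N + 1), (t 0 : ℝ) * tupleWeight g t := by
        rw [sum_congr rfl fun j _ => each_coord j, sum_const, Finset.card_fin,
          nsmul_eq_mul]
        push_cast; ring
    _ = ((M : ℝ) + 1) * ∑ k ∈ range (N + 1), g (k + 1) * compositionSum g M (N - k) := by
        rw [sum_posTuples_succ]
        refine congrArg _ (sum_congr rfl fun k _ => ?_)
        rw [compositionSum, Finset.mul_sum]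
        refine sum_congr rfl fun s _ => ?_
        rw [tupleWeight_cons, Fin.cons_zero]
        field_simp

theorem compositionSum_zero_left (g : ℕ → ℝ) (n : ℕ) :
    compositionSum g 0 n = if n = 0 then 1 else 0 := by
  cases n <;> simp [compositionSum, posTuples, tupleWeight,
    Finset.Nat.antidiagonalTuple_zero_zero, Finset.Nat.antidiagonalTuple_zero_succ]

theorem compositionSum_succ_zero (g : ℕ → ℝ) (M : ℕ) : compositionSum g (M + 1) 0 = 0 := by
  simp [compositionSum, posTuples, Finset.Nat.antidiagonalTuple_zero_right, filter_singleton]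

theorem coeff_Ppoly_succ_zero (g h : ℕ → ℝ) (N : ℕ) : (Ppoly g h (N + 1)).coeff 0 = 0 := by
  rw [Ppoly, mul_assoc, coeff_C_mul, coeff_X_mul_zero, mul_zero]

theorem coeff_Ppoly_succ_succ (g h : ℕ → ℝ) (N M : ℕ) :
    (Ppoly g h (N + 1)).coeff (M + 1) =
      (h (N + 1))⁻¹ * ∑ k ∈ range (N + 1), g (k + 1) * (Ppoly g h (N - k)).coeff M := by
  simp only [Ppoly, mul_assoc, coeff_C_mul, coeff_X_mul, finsetSum_coeff]

theorem factorial_mul_coeff_Ppoly_id (g : ℕ → ℝ) (n m : ℕ) :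
    (m ! : ℝ) * (Ppoly g (fun k => (k : ℝ)) n).coeff m = compositionSum g m n := by
  induction n using Nat.strong_induction_on generalizing m with
  | _ n ih =>
  rcases n with _ | N <;> rcases m with _ | M
  · simp [Ppoly, compositionSum_zero_left]
  · simp [Ppoly, coeff_one, compositionSum_succ_zero]
  · simp [coeff_Ppoly_succ_zero, compositionSum_zero_left]
  · have hsum : ∑ k ∈ range (N + 1), g (k + 1) * compositionSum g M (N - k) =
        M ! * ∑ k ∈ range (N + 1), g (k + 1) * (Ppoly g (fun k => (k : ℝ)) (N - k)).coeff M := by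
      rw [Finset.mul_sum]
      refine Finset.sum_congr rfl fun k hk => ?_
      rw [← ih (N - k) (by simp at hk; omega)]
      ring
    have hN : ((N : ℝ) + 1) ≠ 0 := by positivity
    rw [← mul_right_inj' hN, succ_mul_compositionSum_succ, hsum, coeff_Ppoly_succ_succ,
      factorial_succ]
    push_cast
    field_simp

end ArithPoly

theorem coeff_formula_h_id_general (g : ℕ → ℝ) (n m : ℕ) :
    Acoeff g (fun k => (k : ℝ)) n m / (Nat.factorial n : ℝ) =
      (1 / (Nat.factorial m : ℝ)) *
        ∑ k ∈ (Finset.Nat.antidiagonalTuple m n).filter (fun k => ∀ i, 0 < k i),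
          ∏ i, g (k i) / (k i : ℝ) := by
  rw [Acoeff, ArithPoly.prod_Icc_natCast, mul_div_cancel_left₀ _ (by positivity), one_div,
    eq_inv_mul_iff_mul_eq₀ (by positivity), ArithPoly.factorial_mul_coeff_Ppoly_id]
  rfl

/-- `A_{n,m}^{g,id}/n! = (1/m!) Σ_{k_1+⋯+k_m=n, k_i ≥ 1} ∏ g(k_i)/k_i`. -/
theorem coeff_formula_h_id (g : ℕ → ℝ) (hg : g 1 = 1)
    (hmod : ∃ C : ℝ, 0 < C ∧ ∀ k, 1 ≤ k → |g k| ≤ C ^ k)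
    (n m : ℕ) (hm1 : 1 ≤ m) (hmn : m ≤ n) :
    Acoeff g (fun k => (k : ℝ)) n m / (Nat.factorial n : ℝ) =
      (1 / (Nat.factorial m : ℝ)) *
        ∑ k ∈ (Finset.Nat.antidiagonalTuple m n).filter (fun k => ∀ i, 0 < k i),
          ∏ i, g (k i) / (k i : ℝ) :=
  coeff_formula_h_id_general g n m
end
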